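/- arXiv:1702.00168 — 2 statements merged into one kernel-verified Lean document; each statement's English description precedes it below -/
import Mathlib

section
/- Let ℜ₀ be a finite family of polytopes in ℝ^N satisfying (H1) and (H2), and let d₀ ∈ S. Then the following are equivalent: (i) C = Ω_{ℜ₀}(d₀) (i.e. C belongs to ℜ₁ = F(ℜ₀) as the dual polytope in direction d₀); (ii) card(F(C,d₀) ∩ E) ≥ r_min, i.e. the face F(C,d₀) = {x ∈ C : ⟨x,d₀⟩ = min_{z ∈ C} ⟨z,d₀⟩} contains at least r_min points of E. -/
open scoped RealInnerProductSpace
open Set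

noncomputable section

/-- The ambient Euclidean space `ℝ^N`. -/
abbrev Euc (N : ℕ) : Type := EuclideanSpace ℝ (Fin N)

/-- A polytope: a nonempty convex compact subset of `ℝ^N` with finitely many extreme points. -/
def IsPolytope {N : ℕ} (Ω : Set (Euc N)) : Prop :=
  Ω.Nonempty ∧ Convex ℝ Ω ∧ IsCompact Ω ∧ (Set.extremePoints ℝ Ω).Finite

/-- The unit sphere `S` of `ℝ^N`. -/
def sph (N : ℕ) : Set (Euc N) := Metric.sphere (0 : Euc N) 1

/-- `E(Ω,d)`: the set of `d`-active extreme points of `Ω`. -/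
def activeExt {N : ℕ} (Ω : Set (Euc N)) (d : Euc N) : Set (Euc N) :=
  {x ∈ Set.extremePoints ℝ Ω | ∀ y ∈ Ω, ⟪y, d⟫ ≤ ⟪x, d⟫}

/-- `Ω_ℜ(d) = conv (⋃_{Ω ∈ ℜ} E(Ω,d))`, the dual polytope of the family `ℜ` in direction `d`. -/
def dualPoly {N : ℕ} (ℛ : Set (Set (Euc N))) (d : Euc N) : Set (Euc N) :=
  convexHull ℝ (⋃ Ω ∈ ℛ, activeExt Ω d)

/-- The dual family `F(ℜ) = {Ω_ℜ(d) : d ∈ S}`. -/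
def dualFam {N : ℕ} (ℛ : Set (Set (Euc N))) : Set (Set (Euc N)) :=
  dualPoly ℛ '' sph N

/-- `E_ℜ`, the set of extreme points of all polytopes of the family `ℜ`. -/
def extFam {N : ℕ} (ℛ : Set (Set (Euc N))) : Set (Euc N) :=
  ⋃ Ω ∈ ℛ, Set.extremePoints ℝ Ω

/-- The face `F(Ω,d)` of `Ω` in direction `d` (the set of minimizers of `⟨·,d⟩` on `Ω`). -/
def face {N : ℕ} (Ω : Set (Euc N)) (d : Euc N) : Set (Euc N) :=
  {x ∈ Ω | ∀ z ∈ Ω, ⟪x, d⟫ ≤ ⟪z, d⟫}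

/-!
If `C = conv E` equals the dual polytope in direction `d₀`, then by (H1) every point of `E` is
`d₀`-active in some member of `ℜ₀`; in particular so is a point `x₀` of `E` minimizing `⟨·,d₀⟩`,
and the member `Ω` in which it is active then lies below the level of `x₀`, so `Ω ∩ E` is a subset
of the face `F(C,d₀)` of size at least `r_min`. Conversely, given `x ∈ E`, complete it with points
of `F(C,d₀) ∩ E` to a set `A` of `r_min` points: by (H2) `conv A ∈ ℜ₀`, by (H1) `x` is an extreme
point of `conv A`, and `x` maximizes `⟨·,d₀⟩` on `conv A` since all other points of `A` minimize it
on `C`. Hence every point of `E` is active, and `C = Ω_{ℜ₀}(d₀)`.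
-/

section InnerProductSpace

variable {F : Type*} [NormedAddCommGroup F] [InnerProductSpace ℝ F]

lemma inner_le_of_mem_convexHull {s : Set F} {d : F} {c : ℝ} (h : ∀ y ∈ s, ⟪y, d⟫ ≤ c)
    {z : F} (hz : z ∈ convexHull ℝ s) : ⟪z, d⟫ ≤ c :=
  convexHull_min h (convex_halfSpace_le
    ⟨fun a b => inner_add_left a b d, fun t a => real_inner_smul_left a d t⟩ c) hz

lemma le_inner_of_mem_convexHull {s : Set F} {d : F} {c : ℝ} (h : ∀ y ∈ s, c ≤ ⟪y, d⟫)
    {z : F} (hz : z ∈ convexHull ℝ s) : c ≤ ⟪z, d⟫ :=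
  convexHull_min h (convex_halfSpace_ge
    ⟨fun a b => inner_add_left a b d, fun t a => real_inner_smul_left a d t⟩ c) hz

end InnerProductSpace

/-- By Krein–Milman, `conv A` is the closed convex hull of its extreme points, all of which lie
in `A`. -/
theorem mem_extremePoints_convexHull_of_notMem_convexHull_sdiff {F : Type*} [AddCommGroup F]
    [Module ℝ F] [TopologicalSpace F] [T2Space F] [IsTopologicalAddGroup F] [ContinuousSMul ℝ F]
    [LocallyConvexSpace ℝ F] {A : Set F} (hA : A.Finite) {x : F} (hxA : x ∈ A)
    (hx : x ∉ convexHull ℝ (A \ {x})) : x ∈ (convexHull ℝ A).extremePoints ℝ := by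
  by_contra hext
  have hsub : (convexHull ℝ A).extremePoints ℝ ⊆ convexHull ℝ (A \ {x}) := fun y hy =>
    subset_convexHull ℝ _ ⟨extremePoints_convexHull_subset hy, fun hyx => hext (hyx ▸ hy)⟩
  have hKM := closure_convexHull_extremePoints (hA.isCompact_convexHull (𝕜 := ℝ))
    (convex_convexHull ℝ A)
  refine hx ?_
  rw [← (hA.sdiff.isCompact_convexHull (𝕜 := ℝ)).isClosed.closure_eq]
  refine closure_mono (convexHull_min hsub (convex_convexHull ℝ _)) ?_
  rw [hKM]
  exact subset_convexHull ℝ A hxA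

section Family

variable {N : ℕ} {ℛ : Set (Set (Euc N))}

lemma extremePoints_subset_inter_extFam {Ω : Set (Euc N)} (hΩ : Ω ∈ ℛ) :
    Set.extremePoints ℝ Ω ⊆ Ω ∩ extFam ℛ := fun _ hx =>
  ⟨extremePoints_subset hx, mem_biUnion hΩ hx⟩

lemma biUnion_activeExt_subset_extFam (d : Euc N) :
    ⋃ Ω ∈ ℛ, activeExt Ω d ⊆ extFam ℛ :=
  biUnion_mono subset_rfl fun _ _ _ hx => hx.1

theorem convexHull_extFam_eq_dualPoly_iff
    (H1 : ∀ x ∈ extFam ℛ, x ∉ convexHull ℝ (extFam ℛ \ {x})) (d : Euc N) :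
    convexHull ℝ (extFam ℛ) = dualPoly ℛ d ↔ extFam ℛ ⊆ ⋃ Ω ∈ ℛ, activeExt Ω d := by
  constructor
  · intro h x hx
    by_contra hxU
    refine H1 x hx (convexHull_mono ?_ (h ▸ subset_convexHull ℝ _ hx : x ∈ dualPoly ℛ d))
    exact fun y hy => ⟨biUnion_activeExt_subset_extFam d hy, fun hyx => hxU (hyx ▸ hy)⟩
  · intro h
    exact (convexHull_mono h).antisymm (convexHull_mono (biUnion_activeExt_subset_extFam d))

theorem exists_inter_subset_face_of_subset_activeExt (hfin : (extFam ℛ).Finite)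
    (hne : (extFam ℛ).Nonempty) {d : Euc N} (h : extFam ℛ ⊆ ⋃ Ω ∈ ℛ, activeExt Ω d) :
    ∃ Ω ∈ ℛ, Ω ∩ extFam ℛ ⊆ face (convexHull ℝ (extFam ℛ)) d ∩ extFam ℛ := by
  obtain ⟨x₀, hx₀, hx₀min⟩ := exists_min_image _ (fun y => ⟪y, d⟫) hfin hne
  obtain ⟨Ω, hΩ, -, hx₀max⟩ := mem_iUnion₂.1 (h hx₀)
  refine ⟨Ω, hΩ, fun y ⟨hyΩ, hyE⟩ => ⟨⟨subset_convexHull ℝ _ hyE, fun z hz => ?_⟩, hyE⟩⟩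
  exact (hx₀max y hyΩ).trans (le_inner_of_mem_convexHull hx₀min hz)

theorem extFam_subset_activeExt_of_le_ncard_face (hfin : (extFam ℛ).Finite)
    (H1 : ∀ x ∈ extFam ℛ, x ∉ convexHull ℝ (extFam ℛ \ {x})) {r : ℕ}
    (H2 : ∀ A ⊆ extFam ℛ, A.ncard = r → convexHull ℝ A ∈ ℛ) (hr : 1 ≤ r) {d : Euc N}
    (hface : r ≤ (face (convexHull ℝ (extFam ℛ)) d ∩ extFam ℛ).ncard) :
    extFam ℛ ⊆ ⋃ Ω ∈ ℛ, activeExt Ω d := by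
  intro x hx
  set S := face (convexHull ℝ (extFam ℛ)) d ∩ extFam ℛ
  have hSfin : S.Finite := hfin.subset inter_subset_right
  obtain ⟨A, hxA, hAS, hAr⟩ := exists_subsuperset_card_eq (singleton_subset_iff.2
    (mem_insert x S)) (by rwa [ncard_singleton]) (hface.trans (ncard_le_ncard
      (subset_insert x S) (hSfin.insert x)))
  have hAE : A ⊆ extFam ℛ := hAS.trans (insert_subset hx inter_subset_right)
  have hxext : x ∈ (convexHull ℝ A).extremePoints ℝ :=
    mem_extremePoints_convexHull_of_notMem_convexHull_sdiff (hfin.subset hAE)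
      (singleton_subset_iff.1 hxA)
      fun hmem => H1 x hx (convexHull_mono (sdiff_subset_sdiff_left hAE) hmem)
  have hxmax : ∀ y ∈ convexHull ℝ A, ⟪y, d⟫ ≤ ⟪x, d⟫ := by
    refine fun y hy => inner_le_of_mem_convexHull (fun a ha => ?_) hy
    rcases hAS ha with rfl | haS
    · exact le_rfl
    · exact haS.1.2 x (subset_convexHull ℝ _ hx)
  exact mem_biUnion (H2 A hAE hAr) ⟨hxext, hxmax⟩

end Family

theorem whole_hull_in_dual_iff_general {N : ℕ} (ℛ₀ : Set (Set (Euc N))) (hfin : ℛ₀.Finite)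
    (hpoly : ∀ Ω ∈ ℛ₀, IsPolytope Ω)
    (E : Set (Euc N)) (hE : E = extFam ℛ₀)
    (C : Set (Euc N)) (hC : C = convexHull ℝ E)
    (rmin : ℕ) (hrmin : IsLeast {r : ℕ | ∃ Ω ∈ ℛ₀, r = (Ω ∩ E).ncard} rmin)
    (H1 : ∀ x ∈ E, x ∉ convexHull ℝ (E \ {x}))
    (H2 : ∀ A ⊆ E, A.ncard = rmin → convexHull ℝ A ∈ ℛ₀)
    (d₀ : Euc N) :
    C = dualPoly ℛ₀ d₀ ↔ rmin ≤ ((face C d₀) ∩ E).ncard := by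
  subst hE hC
  have hEfin : (extFam ℛ₀).Finite := hfin.biUnion fun Ω hΩ => (hpoly Ω hΩ).2.2.2
  obtain ⟨Ω₁, hΩ₁, hrmin₁⟩ := hrmin.1
  have hΩ₁E : (Ω₁ ∩ extFam ℛ₀).Nonempty :=
    ((hpoly Ω₁ hΩ₁).2.2.1.extremePoints_nonempty (hpoly Ω₁ hΩ₁).1).mono
      (extremePoints_subset_inter_extFam hΩ₁)
  have hrpos : 1 ≤ rmin :=
    hrmin₁ ▸ (ncard_pos (hEfin.subset inter_subset_right)).2 hΩ₁E
  rw [convexHull_extFam_eq_dualPoly_iff H1]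
  constructor
  · intro h
    obtain ⟨Ω, hΩ, hface⟩ :=
      exists_inter_subset_face_of_subset_activeExt hEfin (hΩ₁E.mono inter_subset_right) h
    exact (hrmin.2 ⟨Ω, hΩ, rfl⟩).trans (ncard_le_ncard hface (hEfin.subset inter_subset_right))
  · exact extFam_subset_activeExt_of_le_ncard_face hEfin H1 H2 hrpos

/-- Proposition `caracC`: `C ∈ ℜ₁` as the dual polytope in direction `d₀`
iff the face `F(C,d₀)` contains at least `r_min` points of `E`. -/
theorem whole_hull_in_dual_iff {N : ℕ} (ℛ₀ : Set (Set (Euc N))) (hfin : ℛ₀.Finite)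
    (hpoly : ∀ Ω ∈ ℛ₀, IsPolytope Ω)
    (E : Set (Euc N)) (hE : E = extFam ℛ₀)
    (C : Set (Euc N)) (hC : C = convexHull ℝ E)
    (rmin : ℕ) (hrmin : IsLeast {r : ℕ | ∃ Ω ∈ ℛ₀, r = (Ω ∩ E).ncard} rmin)
    (H1 : ∀ x ∈ E, x ∉ convexHull ℝ (E \ {x}))
    (H2 : ∀ A ⊆ E, A.ncard = rmin → convexHull ℝ A ∈ ℛ₀)
    (d₀ : Euc N) (hd₀ : d₀ ∈ sph N) :
    C = dualPoly ℛ₀ d₀ ↔ rmin ≤ ((face C d₀) ∩ E).ncard :=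
  whole_hull_in_dual_iff_general ℛ₀ hfin hpoly E hE C hC rmin hrmin H1 H2 d₀
end
end

section
/- Let ℜ₀ be a finite family of polytopes in ℝ^N satisfying (H1) and (H2). Then for every direction d ∈ S one has Ω_{ℜ₀}(d) = Ω_{ℜ₂}(d), where ℜ₂ = F(F(ℜ₀)); i.e. the dual polytopes of ℜ₀ and of ℜ₂ in every direction coincide (hence F(ℜ₀) = F(ℜ₂)). -/
/-!
Let `n = |E|` and let `rankGe E k d` be the set of points of `E` having at least `k` points of `E`
(itself included) weakly below them in direction `d`. By (H2) and the minimality of `r_min`, the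
active extreme points of `ℜ₀` in direction `d` are exactly `rankGe E r_min d`. The key fact is that
the family `{conv (rankGe E k d') : d' ∈ S}` has `rankGe E (n - k + 1) d` as active points in
direction `d`: for `x` with at most `k - 1` points strictly above it in direction `d`, those points
are cut off from the rest of `E` by a hyperplane, and since `E` is in convex position such a cut
can be grown one point at a time, avoiding `x`, to exactly `k - 1` points; the normal `d'` of the
final cut has `rankGe E k d'` equal to the rest of `E`, on which `x` maximises `⟪·, d⟫`.
Applying the key fact twice returns `k ↦ n - k + 1 ↦ k`.
-/

open scoped RealInnerProductSpace
open Set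

noncomputable section

open Filter Topology

section ConvexPosition

variable {V : Type*} [NormedAddCommGroup V] [InnerProductSpace ℝ V]

def belowSet (E : Set V) (d x : V) : Set V := {y ∈ E | ⟪y, d⟫ ≤ ⟪x, d⟫}

def rankGe (E : Set V) (k : ℕ) (d : V) : Set V := {x ∈ E | k ≤ (belowSet E d x).ncard}

def IsLowerCut (E U : Set V) (φ : V) : Prop := ∀ u ∈ U, ∀ z ∈ E \ U, ⟪u, φ⟫ < ⟪z, φ⟫

variable {E U W : Set V} {d x : V} {k : ℕ}

theorem belowSet_subset : belowSet E d x ⊆ E := fun _ hy => hy.1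

theorem rankGe_subset : rankGe E k d ⊆ E := fun _ hx => hx.1

theorem ncard_le_ncard_rankGe_add (hE : E.Finite) :
    E.ncard ≤ (rankGe E k d).ncard + (k - 1) := by
  have hlow : (E \ rankGe E k d).ncard ≤ k - 1 := by
    obtain hemp | hne := (E \ rankGe E k d).eq_empty_or_nonempty
    · simp [hemp]
    obtain ⟨y, hy, hymax⟩ := exists_max_image _ (fun y => ⟪y, d⟫) hE.sdiff hne
    have hsub : E \ rankGe E k d ⊆ belowSet E d y := fun z hz => ⟨hz.1, hymax z hz⟩
    have hy_low : (belowSet E d y).ncard < k := not_le.1 fun h => hy.2 ⟨hy.1, h⟩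
    have := ncard_le_ncard hsub (hE.subset belowSet_subset)
    omega
  have := ncard_sdiff_add_ncard_of_subset (rankGe_subset (k := k) (d := d)) hE
  omega

theorem IsLowerCut.rankGe_eq_sdiff (hcut : IsLowerCut E W d) (hE : E.Finite) (hW : W ⊆ E)
    (hk : W.ncard + 1 = k) : rankGe E k d = E \ W := by
  have hWfin := hE.subset hW
  ext z
  refine ⟨fun hz => ⟨hz.1, fun hzW => ?_⟩, fun hz => ⟨hz.1, ?_⟩⟩
  · have hsub : belowSet E d z ⊆ W := fun y hy =>
      by_contra fun hyW => (hcut z hzW y ⟨hy.1, hyW⟩).not_ge hy.2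
    have := ncard_le_ncard hsub hWfin
    have := hz.2
    omega
  · have hsub : insert z W ⊆ belowSet E d z :=
      insert_subset ⟨hz.1, le_rfl⟩ fun y hy => ⟨hW hy, (hcut y hy z hz).le⟩
    have := ncard_le_ncard hsub (hE.subset belowSet_subset)
    rw [ncard_insert_of_notMem hz.2 hWfin] at this
    omega

theorem IsLowerCut.exists_mem_sphere {ψ z : V} (hcut : IsLowerCut E W ψ) (hz : z ∈ E \ W)
    (hd : d ∈ Metric.sphere (0 : V) 1) : ∃ d' ∈ Metric.sphere (0 : V) 1, IsLowerCut E W d' := by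
  obtain rfl | hψ := eq_or_ne ψ 0
  · refine ⟨d, hd, fun u hu => ?_⟩
    simpa using hcut u hu z hz
  · refine ⟨‖ψ‖⁻¹ • ψ, by simp [norm_smul, hψ], fun u hu z hz => ?_⟩
    rw [real_inner_smul_right, real_inner_smul_right]
    exact mul_lt_mul_of_pos_left (hcut u hu z hz) (by positivity)

theorem mem_rankGe_of_forall_inner_le {d' : V} (hE : E.Finite) (hk : 1 ≤ k)
    (hx : x ∈ rankGe E k d') (hmax : ∀ y ∈ rankGe E k d', ⟪y, d⟫ ≤ ⟪x, d⟫) :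
    x ∈ rankGe E (E.ncard - k + 1) d := by
  have hsub : rankGe E k d' ⊆ belowSet E d x := fun y hy => ⟨rankGe_subset hy, hmax y hy⟩
  have := ncard_le_ncard hsub (hE.subset belowSet_subset)
  have := ncard_le_ncard_rankGe_add hE (k := k) (d := d')
  have := (ncard_pos (hE.subset rankGe_subset)).2 ⟨x, hx⟩
  refine ⟨hx.1, ?_⟩
  show E.ncard - k + 1 ≤ _
  omega

theorem extremePoints_convexHull_eq {A : Set V} (hA : A.Finite)
    (hind : ConvexIndependent ℝ ((↑) : A → V)) : extremePoints ℝ (convexHull ℝ A) = A := by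
  refine extremePoints_convexHull_subset.antisymm fun x hx => by_contra fun hext => ?_
  -- Krein–Milman: `convexHull ℝ A` is the convex hull of its extreme points, which miss `x`.
  have hhull : convexHull ℝ (extremePoints ℝ (convexHull ℝ A)) = convexHull ℝ A :=
    ((hA.subset extremePoints_convexHull_subset).isCompact_convexHull (𝕜 := ℝ)).isClosed.closure_eq
      |>.symm.trans <| closure_convexHull_extremePoints (hA.isCompact_convexHull (𝕜 := ℝ))
        (convex_convexHull ℝ A)
  have hsub : extremePoints ℝ (convexHull ℝ A) ⊆ A \ {x} := fun y hy =>
    ⟨extremePoints_convexHull_subset hy, fun hyx => hext (hyx ▸ hy)⟩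
  exact convexIndependent_set_iff_notMem_convexHull_sdiff (𝕜 := ℝ) |>.1 hind x hx
    (convexHull_mono hsub (hhull.ge (subset_convexHull ℝ A hx)))

variable [CompleteSpace V]

theorem exists_inner_lt_of_notMem_convexHull {A : Set V} (hA : A.Finite)
    (hx : x ∉ convexHull ℝ A) : ∃ h : V, ∀ y ∈ A, ⟪y, h⟫ < ⟪x, h⟫ := by
  obtain ⟨f, u, hfA, hfx⟩ := geometric_hahn_banach_closed_point (convex_convexHull ℝ A)
    (hA.isCompact_convexHull (𝕜 := ℝ)).isClosed hx
  refine ⟨(InnerProductSpace.toDual ℝ V).symm f, fun y hy => ?_⟩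
  rw [real_inner_comm, real_inner_comm _ x, InnerProductSpace.toDual_symm_apply,
    InnerProductSpace.toDual_symm_apply]
  exact (hfA y (subset_convexHull ℝ A hy)).trans hfx

theorem ConvexIndependent.exists_inner_lt (hind : ConvexIndependent ℝ ((↑) : E → V))
    (hE : E.Finite) (hx : x ∈ E) : ∃ h : V, ∀ y ∈ E \ {x}, ⟪y, h⟫ < ⟪x, h⟫ :=
  exists_inner_lt_of_notMem_convexHull hE.sdiff
    (convexIndependent_set_iff_notMem_convexHull_sdiff (𝕜 := ℝ) |>.1 hind x hx)

theorem IsLowerCut.exists_insert_of_forall_le {φ y : V} (hcut : IsLowerCut E U φ)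
    (hind : ConvexIndependent ℝ ((↑) : E → V)) (hE : E.Finite) (hU : U.Finite)
    (hy : y ∈ E \ U) (hymin : ∀ z ∈ E \ U, ⟪y, φ⟫ ≤ ⟪z, φ⟫) :
    ∃ ψ, IsLowerCut E (insert y U) ψ := by
  obtain ⟨g, hg⟩ := hind.exists_inner_lt hE hy.1
  -- `φ - ε • g` breaks the ties at the level of `y` in favour of `y`; a small `ε` keeps `U` below.
  have hsmall : ∀ᶠ ε in 𝓝[>] (0 : ℝ), ∀ u ∈ U,
      ⟪u, φ⟫ - ε * ⟪u, g⟫ < ⟪y, φ⟫ - ε * ⟪y, g⟫ := by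
    refine (hU.eventually_all.2 fun u hu => ?_).filter_mono nhdsWithin_le_nhds
    have hcont : Continuous fun ε : ℝ => (⟪u, φ⟫ - ε * ⟪u, g⟫) - (⟪y, φ⟫ - ε * ⟪y, g⟫) := by
      fun_prop
    have hlim := hcont.tendsto' 0 _ rfl
    exact (hlim.eventually (gt_mem_nhds (by simpa using hcut u hu y hy))).mono
      fun ε hε => sub_neg.1 hε
  obtain ⟨ε, hεU, hε⟩ := (hsmall.and self_mem_nhdsWithin).exists
  have hval : ∀ z, ⟪z, φ - ε • g⟫ = ⟪z, φ⟫ - ε * ⟪z, g⟫ := fun z => by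
    rw [inner_sub_right, real_inner_smul_right]
  have hy_below : ∀ z ∈ E \ insert y U, ⟪y, φ - ε • g⟫ < ⟪z, φ - ε • g⟫ := by
    intro z hz
    have hzU : z ∉ U := fun h => hz.2 (mem_insert_of_mem y h)
    have hzy : z ≠ y := fun h => hz.2 (h ▸ mem_insert z U)
    have := mul_lt_mul_of_pos_left (hg z ⟨hz.1, hzy⟩) (show (0 : ℝ) < ε from hε)
    rw [hval, hval]
    linarith [hymin z ⟨hz.1, hzU⟩]
  refine ⟨φ - ε • g, fun u hu z hz => ?_⟩
  obtain rfl | hu := eq_or_mem_of_mem_insert hu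
  · exact hy_below z hz
  · have hu_below : ⟪u, φ - ε • g⟫ < ⟪y, φ - ε • g⟫ := by
      rw [hval, hval]
      exact hεU u hu
    exact hu_below.trans (hy_below z hz)

theorem IsLowerCut.exists_tilt {φ : V} (hcut : IsLowerCut E U φ)
    (hind : ConvexIndependent ℝ ((↑) : E → V)) (hE : E.Finite) (hU : U ⊆ E) (hx : x ∈ E \ U)
    (hne : ((E \ U) \ {x}).Nonempty) :
    ∃ φ', IsLowerCut E U φ' ∧ ∃ y ∈ (E \ U) \ {x}, ⟪y, φ'⟫ ≤ ⟪x, φ'⟫ := by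
  by_cases hle : ∃ y ∈ (E \ U) \ {x}, ⟪y, φ⟫ ≤ ⟪x, φ⟫
  · exact ⟨φ, hcut, hle⟩
  push Not at hle
  obtain ⟨h, hh⟩ := hind.exists_inner_lt hE hx.1
  have hgap : ∀ z ∈ (E \ U) \ {x}, 0 < ⟪x, h⟫ - ⟪z, h⟫ := fun z hz =>
    sub_pos.2 (hh z ⟨hz.1.1, hz.2⟩)
  -- Tilt `φ` towards `h` until the first point of `(E \ U) \ {x}` comes down to the level of `x`;
  -- `U` stays below `x` since `h` is maximal at `x`.
  obtain ⟨y, hy, hymin⟩ := exists_min_image _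
    (fun z => (⟪z, φ⟫ - ⟪x, φ⟫) / (⟪x, h⟫ - ⟪z, h⟫)) hE.sdiff.sdiff hne
  set t := (⟪y, φ⟫ - ⟪x, φ⟫) / (⟪x, h⟫ - ⟪y, h⟫)
  have ht : 0 ≤ t := div_nonneg (sub_nonneg.2 (hle y hy).le) (hgap y hy).le
  have hval : ∀ z, ⟪z, φ + t • h⟫ = ⟪z, φ⟫ + t * ⟪z, h⟫ := fun z => by
    rw [inner_add_right, real_inner_smul_right]
  have hx_le : ∀ z ∈ (E \ U) \ {x}, ⟪x, φ + t • h⟫ ≤ ⟪z, φ + t • h⟫ := fun z hz => by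
    have := (le_div_iff₀ (hgap z hz)).1 (hymin z hz)
    rw [hval, hval]
    linarith
  refine ⟨φ + t • h, fun u hu z hz => ?_, y, hy, ?_⟩
  · have hux : ⟪u, φ + t • h⟫ < ⟪x, φ + t • h⟫ := by
      have := mul_le_mul_of_nonneg_left (hh u ⟨hU hu, fun hux => hx.2 (hux ▸ hu)⟩).le ht
      rw [hval, hval]
      linarith [hcut u hu x hx]
    by_cases hzx : z = x
    · exact hzx ▸ hux
    · exact hux.trans_le (hx_le z ⟨hz, hzx⟩)
  · have hty : t * (⟪x, h⟫ - ⟪y, h⟫) = ⟪y, φ⟫ - ⟪x, φ⟫ := div_mul_cancel₀ _ (hgap y hy).ne'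
    rw [hval, hval]
    linarith

theorem IsLowerCut.exists_insert {φ : V} (hcut : IsLowerCut E U φ)
    (hind : ConvexIndependent ℝ ((↑) : E → V)) (hE : E.Finite) (hU : U ⊆ E) (hx : x ∈ E \ U)
    (hne : ((E \ U) \ {x}).Nonempty) :
    ∃ y ∈ (E \ U) \ {x}, ∃ ψ, IsLowerCut E (insert y U) ψ := by
  obtain ⟨φ', hcut', y₁, hy₁, hy₁x⟩ := hcut.exists_tilt hind hE hU hx hne
  obtain ⟨y, hy, hymin⟩ := exists_min_image _ (fun z => ⟪z, φ'⟫) hE.sdiff.sdiff hne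
  refine ⟨y, hy, hcut'.exists_insert_of_forall_le hind hE (hE.subset hU) hy.1 fun z hz => ?_⟩
  by_cases hzx : z = x
  · exact hzx ▸ (hymin y₁ hy₁).trans hy₁x
  · exact hymin z ⟨hz, hzx⟩

theorem IsLowerCut.exists_superset {φ : V} (hcut : IsLowerCut E U φ)
    (hind : ConvexIndependent ℝ ((↑) : E → V)) (hE : E.Finite) (hU : U ⊆ E) (hx : x ∈ E \ U)
    {m : ℕ} (hUm : U.ncard ≤ m) (hmE : m < E.ncard) :
    ∃ W, U ⊆ W ∧ W ⊆ E ∧ x ∉ W ∧ W.ncard = m ∧ ∃ ψ, IsLowerCut E W ψ := by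
  induction m, hUm using Nat.le_induction with
  | base => exact ⟨U, subset_rfl, hU, hx.2, rfl, φ, hcut⟩
  | succ m hUm ih =>
    obtain ⟨W, hUW, hWE, hxW, hWm, ψ, hψ⟩ := ih (by omega)
    have hne : ((E \ W) \ {x}).Nonempty := by
      rw [nonempty_iff_ne_empty, Ne, sdiff_sdiff, sdiff_eq_empty]
      intro hsub
      have := (ncard_le_ncard hsub ((hE.subset hWE).union (finite_singleton x))).trans
        (ncard_union_le W {x})
      rw [ncard_singleton] at this
      omega
    obtain ⟨y, hy, ψ', hψ'⟩ := hψ.exists_insert hind hE hWE ⟨hx.1, hxW⟩ hne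
    refine ⟨insert y W, hUW.trans (subset_insert y W), insert_subset hy.1.1 hWE, ?_, ?_, ψ', hψ'⟩
    · rintro (rfl | h)
      exacts [hy.2 rfl, hxW h]
    · rw [ncard_insert_of_notMem hy.1.2 (hE.subset hWE), hWm]

theorem exists_mem_rankGe_forall_inner_le (hind : ConvexIndependent ℝ ((↑) : E → V))
    (hE : E.Finite) (hk : 1 ≤ k) (hkE : k ≤ E.ncard) (hd : d ∈ Metric.sphere (0 : V) 1)
    (hx : x ∈ rankGe E (E.ncard - k + 1) d) :
    ∃ d' ∈ Metric.sphere (0 : V) 1, x ∈ rankGe E k d' ∧ ∀ y ∈ rankGe E k d', ⟪y, d⟫ ≤ ⟪x, d⟫ := by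
  -- The fewer than `k` points strictly above `x` form a lower cut for `-d`; enlarge it to a
  -- lower cut of exactly `k - 1` points avoiding `x`, whose complement is then a `rankGe` set.
  have hxU : x ∈ E \ (E \ belowSet E d x) := ⟨hx.1, fun h => h.2 ⟨hx.1, le_rfl⟩⟩
  have hcut : IsLowerCut E (E \ belowSet E d x) (-d) := by
    intro u hu z hz
    have hz_le : ⟪z, d⟫ ≤ ⟪x, d⟫ := by_contra fun h => hz.2 ⟨hz.1, fun hb => h hb.2⟩
    have hu_gt : ⟪x, d⟫ < ⟪u, d⟫ := not_le.1 fun h => hu.2 ⟨hu.1, h⟩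
    rw [inner_neg_right, inner_neg_right]
    linarith
  have hUk : (E \ belowSet E d x).ncard ≤ k - 1 := by
    rw [ncard_sdiff belowSet_subset (hE.subset belowSet_subset)]
    have := hx.2
    omega
  obtain ⟨W, hUW, hWE, hxW, hWk, ψ, hψ⟩ :=
    hcut.exists_superset hind hE sdiff_subset hxU (m := k - 1) hUk (by omega)
  obtain ⟨d', hd', hcut'⟩ := hψ.exists_mem_sphere ⟨hx.1, hxW⟩ hd
  have hrank := hcut'.rankGe_eq_sdiff hE hWE (k := k) (by omega)
  refine ⟨d', hd', hrank ▸ ⟨hx.1, hxW⟩, fun y hy => ?_⟩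
  rw [hrank] at hy
  by_contra hlt
  exact hy.2 (hUW ⟨hy.1, fun hb => hlt hb.2⟩)

theorem iUnion_sphere_argmax_rankGe (hind : ConvexIndependent ℝ ((↑) : E → V))
    (hE : E.Finite) (hk : 1 ≤ k) (hkE : k ≤ E.ncard) (hd : d ∈ Metric.sphere (0 : V) 1) :
    ⋃ d' ∈ Metric.sphere (0 : V) 1, {x ∈ rankGe E k d' | ∀ y ∈ rankGe E k d', ⟪y, d⟫ ≤ ⟪x, d⟫} =
      rankGe E (E.ncard - k + 1) d := by
  ext x
  simp only [mem_iUnion, mem_ofPred_eq, exists_prop]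
  constructor
  · rintro ⟨d', -, hx, hmax⟩
    exact mem_rankGe_of_forall_inner_le hE hk hx hmax
  · exact exists_mem_rankGe_forall_inner_le hind hE hk hkE hd

end ConvexPosition

section DualFamilies

variable {N : ℕ}

theorem activeExt_convexHull {A : Set (Euc N)} (hA : A.Finite)
    (hind : ConvexIndependent ℝ ((↑) : A → Euc N)) (d : Euc N) :
    activeExt (convexHull ℝ A) d = {x ∈ A | ∀ y ∈ A, ⟪y, d⟫ ≤ ⟪x, d⟫} := by
  ext x
  rw [activeExt, extremePoints_convexHull_eq hA hind]
  refine and_congr_right fun _ => ⟨fun hmax y hy => hmax y (subset_convexHull ℝ A hy),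
    fun hmax => convexHull_min hmax ?_⟩
  exact convex_halfSpace_le (f := fun y => ⟪y, d⟫)
    ⟨fun a b => inner_add_left a b d, fun c a => real_inner_smul_left a d c⟩ _

def rankFam (E : Set (Euc N)) (k : ℕ) : Set (Set (Euc N)) :=
  (fun d => convexHull ℝ (rankGe E k d)) '' sph N

variable {E : Set (Euc N)} {k : ℕ}

theorem dualPoly_rankFam (hind : ConvexIndependent ℝ ((↑) : E → Euc N)) (hE : E.Finite)
    (hk : 1 ≤ k) (hkE : k ≤ E.ncard) {d : Euc N} (hd : d ∈ sph N) :
    dualPoly (rankFam E k) d = convexHull ℝ (rankGe E (E.ncard - k + 1) d) := by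
  rw [dualPoly, rankFam, biUnion_image, ← iUnion_sphere_argmax_rankGe hind hE hk hkE hd]
  congr 1
  exact iUnion₂_congr fun d' _ =>
    activeExt_convexHull (hE.subset rankGe_subset) (hind.mono rankGe_subset) d

theorem dualFam_rankFam (hind : ConvexIndependent ℝ ((↑) : E → Euc N)) (hE : E.Finite)
    (hk : 1 ≤ k) (hkE : k ≤ E.ncard) : dualFam (rankFam E k) = rankFam E (E.ncard - k + 1) :=
  image_congr fun _ hd => dualPoly_rankFam hind hE hk hkE hd

theorem dualPoly_eq_convexHull_rankGe {ℛ : Set (Set (Euc N))}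
    (hind : ConvexIndependent ℝ ((↑) : E → Euc N)) (hE : E.Finite)
    (hext : ∀ Ω ∈ ℛ, extremePoints ℝ Ω ⊆ E) (hk : 1 ≤ k) (hkℛ : ∀ Ω ∈ ℛ, k ≤ (Ω ∩ E).ncard)
    (hhull : ∀ A ⊆ E, A.ncard = k → convexHull ℝ A ∈ ℛ) (d : Euc N) :
    dualPoly ℛ d = convexHull ℝ (rankGe E k d) := by
  rw [dualPoly]
  congr 1
  ext x
  simp only [mem_iUnion, exists_prop]
  constructor
  · rintro ⟨Ω, hΩ, hxΩ, hxmax⟩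
    exact ⟨hext Ω hΩ hxΩ, (hkℛ Ω hΩ).trans <| ncard_le_ncard
      (fun y hy => ⟨hy.2, hxmax y hy.1⟩) (hE.subset belowSet_subset)⟩
  · rintro ⟨hxE, hxk⟩
    obtain ⟨A, hxA, hAx, hAk⟩ := exists_subsuperset_card_eq
      (singleton_subset_iff.2 ⟨hxE, le_rfl⟩ : {x} ⊆ belowSet E d x) (by simpa using hk) hxk
    have hAE : A ⊆ E := hAx.trans belowSet_subset
    refine ⟨convexHull ℝ A, hhull A hAE hAk, ?_⟩
    rw [activeExt_convexHull (hE.subset hAE) (hind.mono hAE)]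
    exact ⟨hxA rfl, fun y hy => (hAx hy).2⟩

end DualFamilies

/-- under (H1) and (H2), the dual polytopes of `ℜ₀` and of `ℜ₂` coincide
in every direction; hence `F(ℜ₀) = F(ℜ₂)`. -/
theorem dual_polys_eq_after_two {N : ℕ} (ℛ₀ : Set (Set (Euc N))) (hfin : ℛ₀.Finite)
    (hpoly : ∀ Ω ∈ ℛ₀, IsPolytope Ω)
    (E : Set (Euc N)) (hE : E = extFam ℛ₀)
    (rmin : ℕ) (hrmin : IsLeast {r : ℕ | ∃ Ω ∈ ℛ₀, r = (Ω ∩ E).ncard} rmin)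
    (H1 : ∀ x ∈ E, x ∉ convexHull ℝ (E \ {x}))
    (H2 : ∀ A ⊆ E, A.ncard = rmin → convexHull ℝ A ∈ ℛ₀) :
    (∀ d ∈ sph N, dualPoly ℛ₀ d = dualPoly (dualFam (dualFam ℛ₀)) d) ∧
      dualFam ℛ₀ = dualFam (dualFam (dualFam ℛ₀)) := by
  have hext : ∀ Ω ∈ ℛ₀, extremePoints ℝ Ω ⊆ E := fun Ω hΩ =>
    hE ▸ subset_biUnion_of_mem (u := fun Ω => extremePoints ℝ Ω) hΩ
  have hEfin : E.Finite := hE ▸ hfin.biUnion fun Ω hΩ => (hpoly Ω hΩ).2.2.2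
  have hind : ConvexIndependent ℝ ((↑) : E → Euc N) :=
    convexIndependent_set_iff_notMem_convexHull_sdiff.2 H1
  obtain ⟨Ω₀, hΩ₀, hr₀⟩ := hrmin.1
  have hr1 : 1 ≤ rmin := by
    obtain ⟨x, hx⟩ := (hpoly Ω₀ hΩ₀).2.2.1.extremePoints_nonempty (hpoly Ω₀ hΩ₀).1
    exact hr₀ ▸ (ncard_pos (hEfin.subset inter_subset_right)).2
      ⟨x, extremePoints_subset hx, hext Ω₀ hΩ₀ hx⟩
  have hrE : rmin ≤ E.ncard := hr₀ ▸ ncard_le_ncard inter_subset_right hEfin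
  have hdual₀ (d : Euc N) : dualPoly ℛ₀ d = convexHull ℝ (rankGe E rmin d) :=
    dualPoly_eq_convexHull_rankGe hind hEfin hext hr1 (fun Ω hΩ => hrmin.2 ⟨Ω, hΩ, rfl⟩) H2 d
  have hfam₂ : dualFam (dualFam ℛ₀) = rankFam E (E.ncard - rmin + 1) := by
    rw [show dualFam ℛ₀ = rankFam E rmin from image_congr fun d _ => hdual₀ d,
      dualFam_rankFam hind hEfin hr1 hrE]
  have hdual₂ : ∀ d ∈ sph N, dualPoly (dualFam (dualFam ℛ₀)) d = dualPoly ℛ₀ d := by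
    intro d hd
    rw [hfam₂, dualPoly_rankFam hind hEfin (by omega) (by omega) hd, hdual₀,
      show E.ncard - (E.ncard - rmin + 1) + 1 = rmin by omega]
  exact ⟨fun d hd => (hdual₂ d hd).symm, image_congr fun d hd => (hdual₂ d hd).symm⟩
end
end
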